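/- arXiv:1710.00565 — 6 statements merged into one kernel-verified Lean document; each statement's English description precedes it below -/
import Mathlib

section
/- Let L be a closed subset of [0,1/2] containing 0 that is closed under the operation s₁ ⊕ s₂ := min{s₁+s₂, 1−s₁−s₂}. If L is finite, then L = {0, 1/k, 2/k, ..., ⌊k/2⌋/k} for some positive integer k. -/
/-!
Let `s` be the least positive element of `L` and `M` its greatest element. Maximality of `M`
forces `M + s > 1/2`, so `t ↦ 1 - t - M` maps the positive elements of `L` into `L`. Combining this
reflection with `⊕` shows that `L` is closed under differences, hence consists of the multiples
of `s` up to `M`. Finally `1 - 2M ∈ L` lies in `[0, 2s)`, so `1 = k s` with `⌊k/2⌋ s = M`.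
-/

open Set

def OplusClosed (L : Set ℝ) : Prop :=
  ∀ s₁ ∈ L, ∀ s₂ ∈ L, min (s₁ + s₂) (1 - s₁ - s₂) ∈ L

namespace OplusClosed

variable {L : Set ℝ} {s M t u : ℝ}

theorem add_mem (hop : OplusClosed L) (ht : t ∈ L) (hu : u ∈ L) (h : t + u ≤ 1 / 2) :
    t + u ∈ L := by
  simpa only [min_eq_left (by linarith : t + u ≤ 1 - t - u)] using hop t ht u hu

theorem one_sub_sub_mem (hop : OplusClosed L) (ht : t ∈ L) (hu : u ∈ L) (h : 1 / 2 ≤ t + u) :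
    1 - t - u ∈ L := by
  simpa only [min_eq_right (by linarith : 1 - t - u ≤ t + u)] using hop t ht u hu

section Extremes

variable (hop : OplusClosed L) (hM : IsGreatest L M) (hs : IsLeast (L ∩ Ioi 0) s)
include hop hM hs

theorem half_lt_add : 1 / 2 < M + s := by
  by_contra! h
  have := hM.2 (hop.add_mem hM.1 hs.1.1 h)
  linarith [hs.1.2.out]

theorem one_sub_sub_greatest_mem (ht : t ∈ L) (ht0 : 0 < t) : 1 - t - M ∈ L :=
  hop.one_sub_sub_mem ht hM.1 (by linarith [hs.2 ⟨ht, ht0⟩, hop.half_lt_add hM hs])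

theorem sub_mem (hsub : L ⊆ Icc 0 (1 / 2)) (ht : t ∈ L) (hu : u ∈ L) (hu0 : 0 < u)
    (hut : u < t) : t - u ∈ L := by
  have hc : 1 - t - M ∈ L := hop.one_sub_sub_greatest_mem hM hs ht (hu0.trans hut)
  -- the second entry of the `min` exceeds `M`, so the `min` is attained by the first one
  have hsum : u + (1 - t - M) ∈ L := by
    have h := hop u hu _ hc
    rcases min_choice (u + (1 - t - M)) (1 - u - (1 - t - M)) with he | he <;> rw [he] at h
    · exact h
    · linarith [hM.2 h]
  have hpos : 0 < u + (1 - t - M) := by linarith [(hsub hc).1]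
  convert hop.one_sub_sub_greatest_mem hM hs hsum hpos using 1
  ring

theorem exists_eq_nat_mul (hsub : L ⊆ Icc 0 (1 / 2)) (ht : t ∈ L) : ∃ i : ℕ, t = i * s := by
  have hs0 : 0 < s := hs.1.2
  suffices key : ∀ n : ℕ, ∀ t ∈ L, t < n * s → ∃ i : ℕ, t = i * s by
    obtain ⟨n, hn⟩ := exists_nat_gt (t / s)
    exact key n t ht ((div_lt_iff₀ hs0).1 hn)
  intro n
  induction n with
  | zero =>
    intro t ht hlt
    rw [Nat.cast_zero, zero_mul] at hlt
    linarith [(hsub ht).1]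
  | succ n ih =>
    intro t ht hlt
    rcases (hsub ht).1.eq_or_lt with rfl | ht0
    · exact ⟨0, by simp⟩
    rcases (hs.2 ⟨ht, ht0⟩).eq_or_lt with rfl | hst
    · exact ⟨1, by simp⟩
    obtain ⟨i, hi⟩ := ih (t - s) (hop.sub_mem hM hs hsub ht hs.1.1 hs0 hst)
      (by push_cast at hlt; linarith)
    exact ⟨i + 1, by push_cast; linarith⟩

theorem nat_mul_mem (hsub : L ⊆ Icc 0 (1 / 2)) (h0 : (0 : ℝ) ∈ L) (i : ℕ) (hi : i * s ≤ M) :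
    (i : ℝ) * s ∈ L := by
  induction i with
  | zero => simpa using h0
  | succ i ih =>
    push_cast at hi ⊢
    rw [add_one_mul] at hi ⊢
    exact hop.add_mem (ih (by linarith [hs.1.2.out])) hs.1.1 (hi.trans (hsub hM.1).2)

theorem eq_image_div_nat (hsub : L ⊆ Icc 0 (1 / 2)) (h0 : (0 : ℝ) ∈ L) :
    ∃ k : ℕ, 0 < k ∧ L = (fun i : ℕ => (i : ℝ) / k) '' Iic (k / 2) := by
  have hs0 : 0 < s := hs.1.2
  have hM0 : 0 < M := hs0.trans_le (hM.2 hs.1.1)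
  obtain ⟨N, hN⟩ := hop.exists_eq_nat_mul hM hs hsub hM.1
  obtain ⟨j, hj⟩ := hop.exists_eq_nat_mul hM hs hsub
    (hop.one_sub_sub_greatest_mem hM hs hM.1 hM0)
  -- `0 ≤ 1 - 2M < 2s` forces `j ≤ 1`
  have hj2 : j < 2 := by
    have : (j : ℝ) * s < 2 * s := by linarith [hop.half_lt_add hM hs]
    exact_mod_cast lt_of_mul_lt_mul_right this hs0.le
  have hN0 : 0 < N := by
    rw [hN] at hM0
    exact_mod_cast pos_of_mul_pos_left hM0 hs0.le
  have hks : ((2 * N + j : ℕ) : ℝ) * s = 1 := by push_cast; linarith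
  refine ⟨2 * N + j, by omega, ?_⟩
  have hdiv : ∀ i : ℕ, (i : ℝ) / (2 * N + j : ℕ) = i * s := fun i => by
    rw [div_eq_iff (by positivity), mul_assoc, mul_comm s, hks, mul_one]
  have hle : ∀ i : ℕ, (i : ℝ) * s ≤ M ↔ i ≤ (2 * N + j) / 2 := fun i => by
    rw [hN, mul_le_mul_iff_left₀ hs0, Nat.cast_le]
    omega
  ext t
  simp only [mem_image, mem_Iic, hdiv]
  constructor
  · intro ht
    obtain ⟨i, rfl⟩ := hop.exists_eq_nat_mul hM hs hsub ht
    exact ⟨i, (hle i).1 (hM.2 ht), rfl⟩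
  · rintro ⟨i, hi, rfl⟩
    exact hop.nat_mul_mem hM hs hsub h0 i ((hle i).2 hi)

end Extremes

end OplusClosed

theorem stmt0_general (L : Set ℝ) (hsub : L ⊆ Set.Icc 0 (1/2)) (h0 : (0:ℝ) ∈ L)
    (hop : ∀ s₁ ∈ L, ∀ s₂ ∈ L, min (s₁ + s₂) (1 - s₁ - s₂) ∈ L)
    (hfin : L.Finite) :
    ∃ k : ℕ, 0 < k ∧ L = (fun i : ℕ => (i : ℝ) / k) '' Set.Iic (k / 2) := by
  rcases L.eq_singleton_or_nontrivial h0 with rfl | hnt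
  · refine ⟨1, one_pos, ?_⟩
    ext t
    simp [eq_comm]
  obtain ⟨t, ht, ht0⟩ := hnt.exists_ne 0
  have hpos : (L ∩ Ioi 0).Nonempty := ⟨t, ht, (hsub ht).1.lt_of_ne' ht0⟩
  have hposfin : (L ∩ Ioi 0).Finite := hfin.inter_of_left _
  have hM : IsGreatest L (sSup L) :=
    ⟨Set.Nonempty.csSup_mem ⟨0, h0⟩ hfin, fun _ hx => le_csSup hfin.bddAbove hx⟩
  have hs : IsLeast (L ∩ Ioi 0) (sInf (L ∩ Ioi 0)) :=
    ⟨hpos.csInf_mem hposfin, fun _ hx => csInf_le hposfin.bddBelow hx⟩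
  exact OplusClosed.eq_image_div_nat hop hM hs hsub h0

/-- Let `L ⊆ [0,1/2]` be closed, contain `0`, and be closed under the
operation `s₁ ⊕ s₂ := min (s₁+s₂) (1-s₁-s₂)`.  If `L` is finite then
`L = {0, 1/k, …, ⌊k/2⌋/k}` for some positive integer `k`. -/
theorem stmt0 (L : Set ℝ) (hsub : L ⊆ Set.Icc 0 (1/2)) (h0 : (0:ℝ) ∈ L)
    (hclosed : IsClosed L)
    (hop : ∀ s₁ ∈ L, ∀ s₂ ∈ L, min (s₁ + s₂) (1 - s₁ - s₂) ∈ L)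
    (hfin : L.Finite) :
    ∃ k : ℕ, 0 < k ∧ L = (fun i : ℕ => (i : ℝ) / k) '' Set.Iic (k / 2) :=
  stmt0_general L hsub h0 hop hfin
end

section
/- Let L be a subset of [0,1/2] containing 0 that is topologically closed and closed under the operation s₁ ⊕ s₂ := min{s₁+s₂, 1−s₁−s₂}. If L is infinite, then L = [0,1/2]. -/
/-!
If `L` has arbitrarily small positive elements `e`, the multiples `k * e ≤ 1/2`, which all lie in
`L`, are `e`-dense in `[0, 1/2]`, and `L` is closed. Otherwise `L` has a least positive element `a`.
As `w ⊕ w = 1 - 2w` for `w ≥ 1/4`, no element of `L` lies strictly between `1/2 - a/2` and `1/2`.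
Adding `a` to `x ∈ L` as often as possible gives `y ∈ L` with `y + a > 1/2`; then `y` and
`y ⊕ a = 1 - y - a` both avoid that gap, which forces `y = 1/2` or `y = 1/2 - a/2`. So `L` lies in
the finite set of points `1/2 - j * a/2` of `[0, 1/2]`.
-/

open Set

theorem IsClosed.exists_isLeast_pos {L : Set ℝ} (hclosed : IsClosed L) {ε : ℝ}
    (hgap : ∀ x ∈ L, 0 < x → ε ≤ x) (hε : 0 < ε) (hpos : ∃ x ∈ L, 0 < x) :
    ∃ a, IsLeast {x ∈ L | 0 < x} a := by
  have hL : {x ∈ L | 0 < x} = L ∩ Ici ε :=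
    ext fun x => ⟨fun hx => ⟨hx.1, hgap x hx.1 hx.2⟩, fun hx => ⟨hx.1, hε.trans_le hx.2⟩⟩
  rw [hL]
  exact ⟨_, (hclosed.inter isClosed_Ici).isLeast_csInf (hL ▸ hpos) ⟨ε, fun _ hx => hx.2⟩⟩

namespace OplusClosed

variable {L : Set ℝ} {a x y : ℝ}

theorem add_mem_s1 (hop : OplusClosed L) (hx : x ∈ L) (hy : y ∈ L) (h : x + y ≤ 1/2) :
    x + y ∈ L := by
  have := hop x hx y hy
  rwa [min_eq_left (by linarith)] at this

theorem one_sub_add_mem (hop : OplusClosed L) (hx : x ∈ L) (hy : y ∈ L) (h : 1/2 ≤ x + y) :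
    1 - x - y ∈ L := by
  have := hop x hx y hy
  rwa [min_eq_right (by linarith)] at this

theorem add_mul_mem (hop : OplusClosed L) (hx : x ∈ L) (hy : y ∈ L) (hy0 : 0 ≤ y) :
    ∀ k : ℕ, x + k * y ≤ 1/2 → x + k * y ∈ L
  | 0, _ => by simpa using hx
  | k + 1, h => by
    have hk : x + (k + 1 : ℕ) * y = x + k * y + y := by push_cast; ring
    rw [hk] at h ⊢
    exact hop.add_mem_s1 (hop.add_mul_mem hx hy hy0 k (by linarith)) hy h

theorem eq_Icc_of_forall_exists_pos_lt (hop : OplusClosed L) (hsub : L ⊆ Icc 0 (1/2))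
    (h0 : 0 ∈ L) (hclosed : IsClosed L) (hsmall : ∀ ε > 0, ∃ e ∈ L, 0 < e ∧ e < ε) :
    L = Icc 0 (1/2) := by
  refine hsub.antisymm fun x hx => hclosed.closure_eq ▸ Metric.mem_closure_iff.2 fun ε hε => ?_
  obtain ⟨e, heL, he0, heε⟩ := hsmall ε hε
  set k := ⌊x / e⌋₊
  have hkx : k * e ≤ x := (le_div_iff₀ he0).1 (Nat.floor_le (div_nonneg hx.1 he0.le))
  have hxk : x < (k + 1) * e := (div_lt_iff₀ he0).1 (Nat.lt_floor_add_one _)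
  refine ⟨k * e, by simpa using hop.add_mul_mem h0 heL he0.le k (by linarith [hx.2]), ?_⟩
  rw [Real.dist_eq, abs_of_nonneg (by linarith)]
  linarith

theorem le_half_sub_of_lt_half (hop : OplusClosed L) (hsub : L ⊆ Icc 0 (1/2))
    (ha : IsLeast {x ∈ L | 0 < x} a) (hx : x ∈ L) (hx2 : x < 1/2) : x ≤ 1/2 - a/2 := by
  by_contra! h
  have ha2 := (hsub ha.1.1).2
  have := ha.2 ⟨hop.one_sub_add_mem hx hx (by linarith), by linarith⟩
  linarith

theorem exists_eq_half_sub (hop : OplusClosed L) (hsub : L ⊆ Icc 0 (1/2))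
    (ha : IsLeast {x ∈ L | 0 < x} a) (hx : x ∈ L) : ∃ j : ℕ, x = 1/2 - j * (a/2) := by
  have ha0 := ha.1.2
  set m := ⌊(1/2 - x) / a⌋₊
  have hmx : m * a ≤ 1/2 - x :=
    (le_div_iff₀ ha0).1 (Nat.floor_le (div_nonneg (by linarith [(hsub hx).2]) ha0.le))
  have hxm : 1/2 - x < (m + 1) * a := (div_lt_iff₀ ha0).1 (Nat.lt_floor_add_one _)
  have hy : x + m * a ∈ L := hop.add_mul_mem hx ha.1.1 ha0.le m (by linarith)
  rcases (hsub hy).2.eq_or_lt with hy2 | hy2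
  · exact ⟨2 * m, by push_cast; linarith⟩
  · have hy_le := hop.le_half_sub_of_lt_half hsub ha hy hy2
    have hy_ge := hop.le_half_sub_of_lt_half hsub ha
      (hop.one_sub_add_mem hy ha.1.1 (by linarith)) (by linarith)
    exact ⟨2 * m + 1, by push_cast; linarith⟩

theorem finite_of_isLeast (hop : OplusClosed L) (hsub : L ⊆ Icc 0 (1/2))
    (ha : IsLeast {x ∈ L | 0 < x} a) : L.Finite := by
  refine ((finite_Iic ⌊1/a⌋₊).image fun j : ℕ => 1/2 - j * (a/2)).subset fun x hx => ?_
  obtain ⟨j, rfl⟩ := hop.exists_eq_half_sub hsub ha hx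
  refine ⟨j, Nat.le_floor ?_, rfl⟩
  rw [le_div_iff₀ ha.1.2]
  linarith [(hsub hx).1]

end OplusClosed

/-- Let `L ⊆ [0,1/2]` be topologically closed, contain `0`, and be closed
under `s₁ ⊕ s₂ := min (s₁+s₂) (1-s₁-s₂)`.  If `L` is infinite then `L = [0,1/2]`. -/
theorem stmt1 (L : Set ℝ) (hsub : L ⊆ Set.Icc 0 (1/2)) (h0 : (0:ℝ) ∈ L)
    (hclosed : IsClosed L)
    (hop : ∀ s₁ ∈ L, ∀ s₂ ∈ L, min (s₁ + s₂) (1 - s₁ - s₂) ∈ L)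
    (hinf : L.Infinite) :
    L = Set.Icc 0 (1/2) := by
  by_cases hsmall : ∀ ε > 0, ∃ e ∈ L, 0 < e ∧ e < ε
  · exact OplusClosed.eq_Icc_of_forall_exists_pos_lt hop hsub h0 hclosed hsmall
  push Not at hsmall
  obtain ⟨ε, hε, hgap⟩ := hsmall
  obtain ⟨x, hxL, hx0⟩ := (hinf.sdiff (finite_singleton 0)).nonempty
  obtain ⟨a, ha⟩ := hclosed.exists_isLeast_pos hgap hε ⟨x, hxL, (hsub hxL).1.lt_of_ne' hx0⟩
  exact absurd (OplusClosed.finite_of_isLeast hop hsub ha) hinf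
end

section
/- Let F = {f₁,...,f_N} be a finite family of homeomorphisms of the circle S¹ = ℝ/ℤ with the standard metric d, and define L(F,d) to be the set of s ∈ [0,1/2] such that d(x,y) = s implies d(f_j(x), f_j(y)) = s for all j and all x,y ∈ S¹. Then L(F,d) is closed under the operation s₁ ⊕ s₂ := min{s₁+s₂, 1−s₁−s₂}: for all s₁, s₂ ∈ L(F,d), s₁ ⊕ s₂ ∈ L(F,d). -/
/-- The set `L(F,d)` of distances simultaneously preserved by all homeomorphisms of the
family `F` on the circle `S¹ = ℝ/ℤ` (with the standard metric `d = dist`). -/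
def presDist {N : ℕ} (F : Fin N → UnitAddCircle ≃ₜ UnitAddCircle) : Set ℝ :=
  {s | s ∈ Set.Icc (0:ℝ) (1/2) ∧
    ∀ j : Fin N, ∀ x y : UnitAddCircle, dist x y = s → dist (F j x) (F j y) = s}

/-!
For `0 ≤ s ≤ 1/2`, a continuous map `f` of the circle preserves the distance `s` iff
`f (x + s) = f x + s` for all `x` or `f (x + s) = f x - s` for all `x`: pointwise one of the two
holds, and the circle is connected. Two such relations for `s₁` and `s₂` with the same sign
compose to one for `s₁ + s₂ ≡ ±(s₁ ⊕ s₂)`. Opposite signs are harmless when `s₁` or `s₂` is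
`0` or `1/2` (where `s ≡ -s`) and impossible otherwise: for a lift `F : ℝ → ℝ` of an injective `f`, which
moves by less than `1` across any interval of length `< 1`, they read `F (t + s₁) = F t + s₁`
and `F (t + s₂) = F t - s₂`. Then `F 0` is attained strictly between `s₁` and `s₂`, at a point
of `(0, 1)` congruent to `0` modulo `1`.
-/

open Set Function

local notation "𝕋" => UnitAddCircle

namespace UnitAddCircle

theorem coe_intCast (n : ℤ) : ((n : ℝ) : 𝕋) = 0 :=
  (AddCircle.coe_eq_zero_iff 1).mpr ⟨n, by simp⟩

theorem norm_eq_iff {s : ℝ} (hs₀ : 0 ≤ s) (hs : s ≤ 1 / 2) {z : 𝕋} :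
    ‖z‖ = s ↔ z = s ∨ z = -s := by
  refine ⟨fun h => ?_, ?_⟩
  · obtain ⟨r, rfl⟩ := QuotientAddGroup.mk_surjective z
    have hr : ((r : ℝ) : 𝕋) = ((r - round r : ℝ) : 𝕋) := by
      rw [AddCircle.coe_sub, coe_intCast, sub_zero]
    rw [norm_eq] at h
    rcases abs_eq hs₀ |>.mp h with h | h
    · exact .inl (by rw [hr, h])
    · exact .inr (by rw [hr, h, AddCircle.coe_neg])
  · have hs' : ‖((s : ℝ) : 𝕋)‖ = s := by
      have : |s| ≤ |(1 : ℝ)| / 2 := by rwa [abs_of_nonneg hs₀, abs_one]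
      rw [(AddCircle.norm_coe_eq_abs_iff 1 one_ne_zero).mpr this, abs_of_nonneg hs₀]
    rintro (rfl | rfl)
    exacts [hs', by rwa [norm_neg]]

theorem dist_eq_iff {s : ℝ} (hs₀ : 0 ≤ s) (hs : s ≤ 1 / 2) {x y : 𝕋} :
    dist x y = s ↔ y = x + s ∨ y = x - s := by
  rw [dist_comm, dist_eq_norm, norm_eq_iff hs₀ hs, sub_eq_iff_eq_add', sub_eq_iff_eq_add',
    ← sub_eq_add_neg]

theorem neg_coe_eq_self_or_mem_Ioo {s : ℝ} (hs₀ : 0 ≤ s) (hs : s ≤ 1 / 2) :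
    -(s : 𝕋) = s ∨ s ∈ Ioo 0 (1 / 2) := by
  rcases hs₀.eq_or_lt with rfl | hs₀
  · simp
  rcases hs.eq_or_lt with rfl | hs
  · left
    rw [← AddCircle.coe_neg, ← AddCircle.coe_add_period 1 (-(1 / 2))]
    norm_num
  · exact .inr ⟨hs₀, hs⟩

theorem coe_min_one_sub (σ : ℝ) :
    ((min σ (1 - σ) : ℝ) : 𝕋) = σ ∨ ((min σ (1 - σ) : ℝ) : 𝕋) = -σ := by
  rcases min_choice σ (1 - σ) with h | h <;> rw [h]
  · exact .inl rfl
  · exact .inr (by rw [AddCircle.coe_sub, AddCircle.coe_period, zero_sub])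

end UnitAddCircle

open UnitAddCircle

def IntertwinesRotation (f : 𝕋 → 𝕋) (z : 𝕋) : Prop :=
  (∀ x, f (x + z) = f x + z) ∨ ∀ x, f (x + z) = f x - z

theorem intertwinesRotation_neg_iff {f : 𝕋 → 𝕋} {z : 𝕋} :
    IntertwinesRotation f (-z) ↔ IntertwinesRotation f z := by
  have key : ∀ w : 𝕋, (∀ x, f (x + -z) = f x + w) ↔ ∀ x, f (x + z) = f x - w := fun w =>
    ⟨fun h x => eq_sub_of_add_eq (by simpa using (h (x + z)).symm),
      fun h x => (eq_sub_iff_add_eq.mp (by simpa using h (x + -z))).symm⟩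
  simp only [IntertwinesRotation, sub_neg_eq_add, key]

theorem forall_dist_map_eq_iff {f : 𝕋 → 𝕋} (hf : Continuous f) {s : ℝ} (hs₀ : 0 ≤ s)
    (hs : s ≤ 1 / 2) :
    (∀ x y, dist x y = s → dist (f x) (f y) = s) ↔ IntertwinesRotation f s := by
  constructor
  · intro h
    have hmaps : MapsTo (fun x => f (x + s) - f x) univ {(s : 𝕋), -(s : 𝕋)} := fun x _ => by
      rcases (dist_eq_iff hs₀ hs).mp (h x _ ((dist_eq_iff hs₀ hs).mpr (.inl rfl))) with h' | h'
      · simp [h']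
      · simp [h', sub_eq_add_neg]
    have hconst : ∀ x, f (x + s) - f x = f s - f 0 := fun x => by
      simpa using isPreconnected_univ.constant_of_mapsTo (toFinite _).isDiscrete
        ((hf.comp (continuous_add_const _)).sub hf).continuousOn hmaps (mem_univ x) (mem_univ 0)
    rcases (by simpa using hmaps (mem_univ 0) : f s - f 0 = s ∨ f s - f 0 = -s) with h0 | h0
    · exact .inl fun x => by rw [← sub_eq_iff_eq_add', hconst x, h0]
    · exact .inr fun x => by rw [sub_eq_add_neg, ← sub_eq_iff_eq_add', hconst x, h0]
  · intro h
    have key : ∀ x, dist (f x) (f (x + s)) = s := fun x => by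
      rcases h with h | h <;> rw [h x]
      exacts [(dist_eq_iff hs₀ hs).mpr (.inl rfl), (dist_eq_iff hs₀ hs).mpr (.inr rfl)]
    intro x y hxy
    rcases (dist_eq_iff hs₀ hs).mp hxy with rfl | rfl
    · exact key x
    · simpa [dist_comm] using key (x - s)

theorem exists_lift (f : C(𝕋, 𝕋)) : ∃ F : C(ℝ, ℝ), ∀ t : ℝ, (F t : 𝕋) = f t := by
  obtain ⟨F, ⟨-, hF⟩, -⟩ := (AddCircle.isCoveringMap_coe 1).existsUnique_continuousMap_lifts
    (f.comp ⟨((↑) : ℝ → 𝕋), AddCircle.continuous_mk' 1⟩) 0 (f 0).out (f 0).out_eq'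
  exact ⟨F, fun t => congrFun hF t⟩

section Lift

variable {f : 𝕋 → 𝕋} {F : ℝ → ℝ}

theorem abs_lift_add_sub_lt_one (hf : Injective f) (hF : Continuous F)
    (hFf : ∀ t, (F t : 𝕋) = f t) {t w : ℝ} (hw₀ : 0 ≤ w) (hw : w < 1) :
    |F (t + w) - F t| < 1 := by
  by_contra! h
  obtain ⟨k, hk, hmem⟩ : ∃ k : ℤ, k ≠ 0 ∧ F t + k ∈ uIcc (F t) (F (t + w)) := by
    rcases le_abs'.mp h with h | h
    · exact ⟨-1, by norm_num, mem_uIcc.mpr (.inr ⟨by push_cast; linarith, by simp⟩)⟩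
    · exact ⟨1, by norm_num, mem_uIcc.mpr (.inl ⟨by simp, by push_cast; linarith⟩)⟩
  obtain ⟨c, hc, hFc⟩ := intermediate_value_uIcc hF.continuousOn hmem
  rw [uIcc_of_le (by linarith)] at hc
  have hct : (c : 𝕋) = t :=
    hf (by rw [← hFf, ← hFf, hFc, AddCircle.coe_add, coe_intCast, add_zero])
  rw [AddCircle.coe_eq_coe_iff_of_mem_Ico (a := t) ⟨hc.1, by linarith [hc.2]⟩
    ⟨le_rfl, by linarith⟩] at hct
  subst hct
  exact hk (by simpa using hFc)

theorem lift_add_eq (hf : Injective f) (hF : Continuous F) (hFf : ∀ t, (F t : 𝕋) = f t)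
    {s r : ℝ} (hs₀ : 0 ≤ s) (hs : s < 1 / 2) (hr : |r| < 1 / 2)
    (h : ∀ x : 𝕋, f (x + s) = f x + r) (t : ℝ) : F (t + s) = F t + r := by
  have hint : MapsTo (fun t => F (t + s) - F t - r) univ (AddSubgroup.zmultiples (1 : ℝ)) :=
    fun t _ => AddSubgroup.mem_zmultiples_iff.mpr <| (AddCircle.coe_eq_zero_iff 1).mp <| by
      simp only [AddCircle.coe_sub, AddCircle.coe_add, hFf, h, add_sub_cancel_left, sub_self]
  obtain ⟨k, hk⟩ := AddSubgroup.mem_zmultiples_iff.mp (hint (mem_univ 0))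
  have hshift : ∀ t, F (t + s) = F t + r + k := fun t => by
    have := isPreconnected_univ.constant_of_mapsTo
      (isDiscrete_iff_discreteTopology.mpr
        (inferInstanceAs (DiscreteTopology (AddSubgroup.zmultiples (1 : ℝ)))))
      (by fun_prop : Continuous fun t => F (t + s) - F t - r).continuousOn hint
      (mem_univ t) (mem_univ 0)
    simp only [zsmul_eq_mul, mul_one] at hk this
    linarith
  -- `F` moves by `r + k` across `[0, s]` and by `2 (r + k)` across `[0, 2 s]`.
  have h₁ := abs_lift_add_sub_lt_one hf hF hFf (t := 0) hs₀ (by linarith)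
  have h₂ := abs_lift_add_sub_lt_one hf hF hFf (t := 0) (w := s + s) (by linarith) (by linarith)
  rw [← add_assoc, hshift, hshift] at h₂
  rw [hshift] at h₁
  have hk0 : k = 0 := by
    have : |(k : ℝ)| < 1 := by
      rw [abs_lt] at *
      constructor <;> linarith
    have : -1 < k ∧ k < 1 := by exact_mod_cast abs_lt.mp this
    omega
  rw [hshift, hk0, Int.cast_zero, add_zero]

end Lift

theorem Continuous.not_intertwines_add_and_sub {f : 𝕋 → 𝕋} (hfc : Continuous f)
    (hf : Injective f) {a b : ℝ} (ha : a ∈ Ioo 0 (1 / 2)) (hb : b ∈ Ioo 0 (1 / 2))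
    (hfa : ∀ x, f (x + a) = f x + a) (hfb : ∀ x, f (x + b) = f x - b) : False := by
  obtain ⟨F, hFf⟩ := exists_lift ⟨f, hfc⟩
  replace hFf : ∀ t, (F t : 𝕋) = f t := hFf
  have hFa := lift_add_eq hf F.continuous hFf ha.1.le ha.2
    (by rw [abs_of_pos ha.1]; exact ha.2) hfa 0
  have hFb := lift_add_eq hf F.continuous hFf hb.1.le hb.2 (r := -b)
    (by rw [abs_neg, abs_of_pos hb.1]; exact hb.2)
    (by simpa only [AddCircle.coe_neg, ← sub_eq_add_neg] using hfb) 0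
  rw [zero_add] at hFa hFb
  obtain ⟨c, hc, hFc⟩ := intermediate_value_uIcc (a := a) (b := b) F.continuous.continuousOn
    (show F 0 ∈ uIcc (F a) (F b) from
      mem_uIcc.mpr (.inr ⟨by linarith [hb.1], by linarith [ha.1]⟩))
  have hc₀ : 0 < c := by rcases mem_uIcc.mp hc with h | h <;> linarith [ha.1, hb.1, h.1]
  have hc₁ : c < 1 := by rcases mem_uIcc.mp hc with h | h <;> linarith [ha.2, hb.2, h.2]
  have hc0 : ((c : ℝ) : 𝕋) = ((0 : ℝ) : 𝕋) := hf (by rw [← hFf, ← hFf, hFc])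
  rw [AddCircle.coe_eq_coe_iff_of_mem_Ico (a := 0) ⟨hc₀.le, by linarith⟩
    ⟨le_rfl, by norm_num⟩] at hc0
  exact hc₀.ne' hc0

theorem IntertwinesRotation.add_of_add_of_sub {f : 𝕋 → 𝕋} (hfc : Continuous f)
    (hf : Injective f) {a b : ℝ} (ha : a ∈ Icc 0 (1 / 2)) (hb : b ∈ Icc 0 (1 / 2))
    (hfa : ∀ x, f (x + a) = f x + a) (hfb : ∀ x, f (x + b) = f x - b) :
    IntertwinesRotation f (a + b) := by
  rcases neg_coe_eq_self_or_mem_Ioo ha.1 ha.2 with ha' | ha'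
  · exact .inr fun x => by rw [← add_assoc, hfb, hfa]; nth_rw 1 [← ha']; abel
  rcases neg_coe_eq_self_or_mem_Ioo hb.1 hb.2 with hb' | hb'
  · exact .inl fun x => by rw [← add_assoc, hfb, hfa]; nth_rw 1 [← hb']; abel
  exact (hfc.not_intertwines_add_and_sub hf ha' hb' hfa hfb).elim

theorem IntertwinesRotation.add {f : 𝕋 → 𝕋} (hfc : Continuous f) (hf : Injective f)
    {a b : ℝ} (ha : a ∈ Icc 0 (1 / 2)) (hb : b ∈ Icc 0 (1 / 2))
    (hfa : IntertwinesRotation f a) (hfb : IntertwinesRotation f b) :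
    IntertwinesRotation f (a + b) := by
  rcases hfa with hfa | hfa <;> rcases hfb with hfb | hfb
  · exact .inl fun x => by rw [← add_assoc, hfb, hfa, add_assoc]
  · exact .add_of_add_of_sub hfc hf ha hb hfa hfb
  · exact add_comm (a : 𝕋) b ▸ .add_of_add_of_sub hfc hf hb ha hfb hfa
  · exact .inr fun x => by rw [← add_assoc, hfb, hfa, sub_sub]

/-- `L(F,d)` is closed under the operation `s₁ ⊕ s₂ := min (s₁+s₂) (1-s₁-s₂)`. -/
theorem stmt2 {N : ℕ} (F : Fin N → UnitAddCircle ≃ₜ UnitAddCircle)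
    (s₁ s₂ : ℝ) (h1 : s₁ ∈ presDist F) (h2 : s₂ ∈ presDist F) :
    min (s₁ + s₂) (1 - s₁ - s₂) ∈ presDist F := by
  obtain ⟨hs₁, hF₁⟩ := h1
  obtain ⟨hs₂, hF₂⟩ := h2
  have hs : min (s₁ + s₂) (1 - s₁ - s₂) ∈ Icc (0 : ℝ) (1 / 2) :=
    ⟨le_min (by linarith [hs₁.1, hs₂.1]) (by linarith [hs₁.2, hs₂.2]),
      min_le_iff.mpr (by by_contra! h; linarith [h.1, h.2])⟩
  refine ⟨hs, fun j => ?_⟩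
  have hc := (F j).continuous
  have hsum := IntertwinesRotation.add hc (F j).injective hs₁ hs₂
    ((forall_dist_map_eq_iff hc hs₁.1 hs₁.2).mp (hF₁ j))
    ((forall_dist_map_eq_iff hc hs₂.1 hs₂.2).mp (hF₂ j))
  refine (forall_dist_map_eq_iff hc hs.1 hs.2).mpr ?_
  rw [sub_sub]
  rcases coe_min_one_sub (s₁ + s₂) with h | h <;> rw [h, AddCircle.coe_add]
  · exact hsum
  · exact intertwinesRotation_neg_iff.mpr hsum
end

section
/- Let (F,p) be an iterated function system of homeomorphisms f₁,...,f_N of the circle S¹ with a non-degenerate probability vector p = (p₁,...,p_N) (all p_j > 0). Assume F is forward minimal, i.e., every nonempty closed set A ⊆ S¹ with f_j(A) ⊆ A for all j equals S¹. Then every Borel probability measure μ on S¹ satisfying μ = Σ_j p_j (f_j)_*⁻¹μ (i.e., μ(E) = Σ_j p_j μ(f_j⁻¹(E)) for all Borel E) is nonatomic. -/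
/-!
The largest atoms of a stationary measure form a finite set, and averaging the stationarity
equation at a largest atom shows that every preimage `f_j⁻¹ z` of a largest atom `z` is again a
largest atom. A finite set mapped into itself by the bijections `f_j⁻¹` is mapped onto itself, so it
is also forward invariant and closed; by forward minimality it would be the whole (infinite) circle.
-/

open MeasureTheory Set
open scoped NNReal ENNReal

theorem eq_of_le_of_sum_mul_eq {ι R : Type*} [Semiring R] [LinearOrder R] [IsStrictOrderedRing R]
    {s : Finset ι} {w x : ι → R} {m : R} (hw : ∀ i ∈ s, 0 < w i) (hw_sum : ∑ i ∈ s, w i = 1)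
    (hx : ∀ i ∈ s, x i ≤ m) (h : ∑ i ∈ s, w i * x i = m) : ∀ i ∈ s, x i = m := by
  have hle : ∀ i ∈ s, w i * x i ≤ w i * m := fun i hi =>
    mul_le_mul_of_nonneg_left (hx i hi) (hw i hi).le
  have hsum_eq : ∑ i ∈ s, w i * x i = ∑ i ∈ s, w i * m := by
    rw [h, ← Finset.sum_mul, hw_sum, one_mul]
  intro i hi
  exact le_antisymm (hx i hi)
    (le_of_mul_le_mul_left ((Finset.sum_eq_sum_iff_of_le hle).mp hsum_eq i hi).ge (hw i hi))

theorem ENNReal.eq_of_le_of_sum_mul_eq {ι : Type*} [Fintype ι] {w : ι → ℝ≥0} {x : ι → ℝ≥0∞}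
    {m : ℝ≥0∞} (hw : ∀ i, 0 < w i) (hw_sum : ∑ i, w i = 1) (hm : m ≠ ∞) (hx : ∀ i, x i ≤ m)
    (h : ∑ i, (w i : ℝ≥0∞) * x i = m) (i : ι) : x i = m := by
  lift x to ι → ℝ≥0 using fun i => ne_top_of_le_ne_top hm (hx i)
  lift m to ℝ≥0 using hm
  beta_reduce at hx h ⊢
  norm_cast at hx h ⊢
  exact _root_.eq_of_le_of_sum_mul_eq (fun i _ => hw i) hw_sum (fun i _ => hx i) h i
    (Finset.mem_univ i)

theorem Set.Finite.mapsTo_of_mapsTo_symm {α : Type*} {e : α ≃ α} {s : Set α} (hs : s.Finite)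
    (h : MapsTo e.symm s s) : MapsTo e s s := by
  intro x hx
  obtain ⟨y, hy, rfl⟩ := ((hs.injOn_iff_bijOn_of_mapsTo h).mp e.symm.injective.injOn).surjOn hx
  simpa using hy

instance UnitAddCircle.instInfinite : Infinite UnitAddCircle :=
  (AddCircle.equivIco 1 0).infinite_iff.mpr (Ico_infinite (by norm_num)).to_subtype

namespace MeasureTheory.Measure

section Atoms

variable {X : Type*} [MeasurableSpace X] [MeasurableSingletonClass X]
  (μ : Measure X) [IsFiniteMeasure μ]

theorem finite_setOf_le_measure_singleton {ε : ℝ≥0∞} (hε : 0 < ε) : {x | ε ≤ μ {x}}.Finite :=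
  finite_const_le_meas_of_disjoint_iUnion μ hε measurableSet_singleton
    (fun _ _ hxy => disjoint_singleton.mpr hxy) (measure_ne_top μ _)

theorem finite_setOf_measure_singleton_eq {c : ℝ≥0∞} (hc : c ≠ 0) : {x | μ {x} = c}.Finite :=
  (finite_setOf_le_measure_singleton μ (pos_iff_ne_zero.mpr hc)).subset fun _ hx => hx.ge

theorem exists_forall_measure_singleton_le {x₀ : X} (hx₀ : μ {x₀} ≠ 0) :
    ∃ x₁, ∀ x, μ {x} ≤ μ {x₁} := by
  obtain ⟨x₁, hx₁, hmax⟩ := exists_max_image {x | μ {x₀} ≤ μ {x}} (fun x => μ {x})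
    (finite_setOf_le_measure_singleton μ (pos_iff_ne_zero.mpr hx₀)) ⟨x₀, le_refl (μ {x₀})⟩
  refine ⟨x₁, fun x => ?_⟩
  by_cases hx : μ {x₀} ≤ μ {x}
  · exact hmax x hx
  · exact (not_le.mp hx).le.trans hx₁

end Atoms

section Stationary

variable {X : Type*} [TopologicalSpace X] [MeasurableSpace X] [BorelSpace X]
  {ι : Type*} [Fintype ι] {F : ι → X ≃ₜ X} {p : ι → ℝ≥0} {μ : Measure X}

theorem map_homeomorph_apply_singleton (e : X ≃ₜ X) (y : X) : μ.map e {y} = μ {e.symm y} := by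
  rw [← e.toMeasurableEquiv_coe, MeasurableEquiv.map_apply, Homeomorph.toMeasurableEquiv_coe,
    ← e.image_symm, image_singleton]

theorem measure_singleton_eq_sum_of_stationary (hμ : μ = ∑ j, p j • μ.map (F j)) (z : X) :
    μ {z} = ∑ j, (p j : ℝ≥0∞) * μ {(F j).symm z} := by
  conv_lhs => rw [hμ]
  simp only [finsetSum_apply, smul_apply, map_homeomorph_apply_singleton, ENNReal.smul_def,
    smul_eq_mul]

theorem mapsTo_setOf_measure_singleton_eq_max [T1Space X] [IsFiniteMeasure μ]
    (hp : ∀ j, 0 < p j) (hsum : ∑ j, p j = 1) (hμ : μ = ∑ j, p j • μ.map (F j)) {z₁ : X}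
    (hmax : ∀ z, μ {z} ≤ μ {z₁}) (hz₁ : μ {z₁} ≠ 0) (j : ι) :
    MapsTo (F j) {z | μ {z} = μ {z₁}} {z | μ {z} = μ {z₁}} := by
  refine (finite_setOf_measure_singleton_eq μ hz₁).mapsTo_of_mapsTo_symm (e := (F j).toEquiv)
    fun z (hz : μ {z} = μ {z₁}) => ?_
  rw [measure_singleton_eq_sum_of_stationary hμ] at hz
  exact ENNReal.eq_of_le_of_sum_mul_eq hp hsum (measure_ne_top μ _) (fun _ => hmax _) hz j

end Stationary

end MeasureTheory.Measure

/-- for a forward minimal IFS with (non-degenerate) probabilities of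
homeomorphisms of the circle, every invariant Borel probability measure is nonatomic. -/
theorem stmt5 {N : ℕ} (F : Fin N → UnitAddCircle ≃ₜ UnitAddCircle)
    (p : Fin N → ℝ≥0) (hp : ∀ j, 0 < p j) (hsum : ∑ j, p j = 1)
    (hmin : ∀ A : Set UnitAddCircle, A.Nonempty → IsClosed A →
      (∀ j, F j '' A ⊆ A) → A = Set.univ)
    (μ : Measure UnitAddCircle) [IsProbabilityMeasure μ]
    (hinv : μ = ∑ j, p j • Measure.map (F j) μ) :
    ∀ z : UnitAddCircle, μ {z} = 0 := by
  by_contra! ⟨z₀, hz₀⟩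
  obtain ⟨z₁, hmax⟩ := Measure.exists_forall_measure_singleton_le μ hz₀
  have hz₁ : μ {z₁} ≠ 0 := ne_bot_of_le_ne_bot hz₀ (hmax z₀)
  set A := {z | μ {z} = μ {z₁}}
  have hA_fin : A.Finite := Measure.finite_setOf_measure_singleton_eq μ hz₁
  have hA_univ : A = univ := hmin A ⟨z₁, rfl⟩ hA_fin.isClosed fun j =>
    (Measure.mapsTo_setOf_measure_singleton_eq_max hp hsum hinv hmax hz₁ j).image_subset
  exact infinite_univ (hA_univ ▸ hA_fin)
end

section
/- Let (F,p) be a forward minimal IFS with probabilities of homeomorphisms of S¹. Then for every z ∈ S¹, every nonempty open set O ⊆ S¹ and every j ∈ {1,...,N}, with probability one the event {Z_n^z ∈ O and I_{n+1} = j} occurs for infinitely many n. -/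
/-!
By compactness of the circle, forward minimality is uniform: there is `L` such that from every
point some word of length at most `L` leads into `O`. Whatever the first `n` letters were, the
next `L + 1` letters spell that word for the current point followed by `j` with probability at
least `ε ^ (L + 1)`, where `ε = min p`, and this is independent of the past. So the probability of
missing the event during `t` consecutive blocks of length `L + 1` is at most
`(1 - ε ^ (L + 1)) ^ t → 0`.
-/

open MeasureTheory Filter
open scoped NNReal

/-- The random trajectory `Z_0 = z`, `Z_{n+1} = f_{I_{n+1}}(Z_n)` (indices shifted to
start at `0`), so that the map applied right after time `n` is `f_{I_n}`. -/
def traj {Ω K : Type*} {N : ℕ} (F : Fin N → K → K) (I : ℕ → Ω → Fin N) (x : K) :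
    ℕ → Ω → K
  | 0 => fun _ => x
  | n + 1 => fun ω => F (I n ω) (traj F I x n ω)

open ProbabilityTheory
open scoped ENNReal Topology

section Words

variable {ι K : Type*} [TopologicalSpace K] {F : ι → K → K}

lemma continuous_foldl (hF : ∀ i, Continuous (F i)) (l : List ι) :
    Continuous fun x => l.foldl (fun y i => F i y) x := by
  induction l with
  | nil => exact continuous_id
  | cons a l ih => exact ih.comp (hF a)

lemma exists_forall_exists_length_le_foldl_mem [CompactSpace K] (hF : ∀ i, Continuous (F i))
    {O : Set K} (hO : IsOpen O) (h : ∀ x, ∃ l : List ι, l.foldl (fun y i => F i y) x ∈ O) :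
    ∃ L, ∀ x, ∃ l : List ι, l.length ≤ L ∧ l.foldl (fun y i => F i y) x ∈ O := by
  choose w hw using h
  obtain ⟨s, hs⟩ := isCompact_univ.elim_finite_subcover
    (fun x => (fun y => (w x).foldl (fun y i => F i y) y) ⁻¹' O)
    (fun x => hO.preimage (continuous_foldl hF (w x))) (fun y _ => Set.mem_iUnion.2 ⟨y, hw y⟩)
  refine ⟨s.sup fun x => (w x).length, fun y => ?_⟩
  obtain ⟨x, hx, hy⟩ := Set.mem_iUnion₂.1 (hs (Set.mem_univ y))
  exact ⟨w x, Finset.le_sup (f := fun x => (w x).length) hx, hy⟩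

end Words

section Trajectory

variable {Ω K : Type*} {N : ℕ} {F : Fin N → K → K}

lemma traj_congr {I J : ℕ → Ω → Fin N} {x : K} {ω ω' : Ω} :
    ∀ {n}, (∀ k < n, I k ω = J k ω') → traj F I x n ω = traj F J x n ω'
  | 0, _ => rfl
  | n + 1, h => by
    change F (I n ω) (traj F I x n ω) = F (J n ω') (traj F J x n ω')
    rw [h n n.lt_succ_self, traj_congr fun k hk => h k (hk.trans n.lt_succ_self)]

lemma traj_add (I : ℕ → Ω → Fin N) (x : K) (ω : Ω) (n : ℕ) :
    ∀ k, traj F I x (n + k) ω = traj F (fun i => I (n + i)) (traj F I x n ω) k ω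
  | 0 => rfl
  | k + 1 => congrArg (F (I (n + k) ω)) (traj_add I x ω n k)

lemma traj_length_eq_foldl (I : ℕ → Ω → Fin N) (x : K) (ω : Ω) (l : List (Fin N))
    (h : ∀ i (hi : i < l.length), I i ω = l[i]) :
    traj F I x l.length ω = l.foldl (fun y i => F i y) x := by
  induction l using List.reverseRecOn with
  | nil => rfl
  | append_singleton l a ih =>
    have hl : ∀ i (hi : i < l.length), I i ω = l[i] := fun i hi => by
      rw [h i (by simp; omega), List.getElem_append_left]
    have ha : I l.length ω = a := by simpa using h l.length (by simp)
    rw [List.length_append, List.length_singleton, List.foldl_append]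
    change F (I l.length ω) (traj F I x l.length ω) = F a (l.foldl (fun y i => F i y) x)
    rw [ha, ih hl]

variable [MeasurableSpace Ω] [MeasurableSpace K]

lemma measurable_traj (hF : ∀ i, Measurable (F i)) {I : ℕ → Ω → Fin N}
    (hI : ∀ n, Measurable (I n)) (x : K) : ∀ n, Measurable (traj F I x n)
  | 0 => measurable_const
  | n + 1 => (measurable_from_prod_countable_left (f := fun q : K × Fin N => F q.2 q.1) hF).comp
      ((measurable_traj hF hI x n).prodMk (hI n))

end Trajectory

section Probability

variable {Ω : Type*} [MeasurableSpace Ω] {μ : Measure Ω}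

lemma measure_diff_le_of_mul_le [IsFiniteMeasure μ] {A E : Set Ω} (hE : MeasurableSet E)
    {δ : ℝ≥0∞} (h : δ * μ A ≤ μ (A ∩ E)) : μ (A \ E) ≤ (1 - δ) * μ A :=
  calc μ (A \ E) = μ A - μ (A ∩ E) := by
        rw [← measure_inter_add_sdiff A hE, ENNReal.add_sub_cancel_left (measure_ne_top μ _)]
    _ ≤ μ A - δ * μ A := tsub_le_tsub_left h _
    _ = (1 - δ) * μ A := by rw [ENNReal.sub_mul fun _ _ => measure_ne_top μ A, one_mul]

lemma mul_measure_le_measure_inter_of_indepFun {α β : Type*} [MeasurableSpace α]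
    [MeasurableSingletonClass α] [Countable α] [MeasurableSpace β] [MeasurableSingletonClass β]
    {X : Ω → α} {Y : Ω → β} (hX : Measurable X) (hY : Measurable Y) (hXY : IndepFun X Y μ)
    {δ : ℝ≥0∞} (hδ : ∀ b, δ ≤ μ (Y ⁻¹' {b})) {A E : Set Ω}
    (hA : ∀ ω ω', X ω = X ω' → ω ∈ A → ω' ∈ A)
    (hE : ∀ ω ∈ A, ∃ b, X ⁻¹' {X ω} ∩ Y ⁻¹' {b} ⊆ E) :
    δ * μ A ≤ μ (A ∩ E) := by
  rcases A.eq_empty_or_nonempty with rfl | ⟨ω, hω⟩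
  · simp
  have : Nonempty Ω := ⟨ω⟩
  have : Nonempty β := ⟨(hE ω hω).choose⟩
  choose! b hb using hE
  have hS : ∀ a ∈ X '' A, ∃ ω ∈ A, X ω = a := fun a ha => ha
  choose! ω₀ hω₀A hω₀ using hS
  have hAS : A = X ⁻¹' (X '' A) :=
    (Set.subset_preimage_image X A).antisymm fun ω ⟨ω', hω', hX'⟩ => hA ω' ω hX' hω'
  let piece a := X ⁻¹' {a} ∩ Y ⁻¹' {b (ω₀ a)}
  have hpiece : ∀ a ∈ X '' A, piece a ⊆ A ∩ E := fun a ha ω ⟨hωa, hωb⟩ => by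
    have hXω : X (ω₀ a) = X ω := (hω₀ a ha).trans hωa.symm
    exact ⟨hA _ _ hXω (hω₀A a ha), hb _ (hω₀A a ha) ⟨hXω.symm, hωb⟩⟩
  calc δ * μ A = ∑' a : X '' A, δ * μ (X ⁻¹' {(a : α)}) := by
        rw [ENNReal.tsum_mul_left, tsum_measure_preimage_singleton (Set.to_countable _)
          fun a _ => hX (measurableSet_singleton a), ← hAS]
    _ ≤ ∑' a : X '' A, μ (piece a) := ENNReal.tsum_le_tsum fun a => by
        rw [hXY.measure_inter_preimage_eq_mul _ _ (measurableSet_singleton _)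
          (measurableSet_singleton _), mul_comm]
        exact mul_le_mul_right (hδ _) _
    _ = μ (⋃ a ∈ X '' A, piece a) :=
        (measure_biUnion (f := piece) (Set.to_countable _)
          ((Set.pairwiseDisjoint_fiber X _).mono fun _ => Set.inter_subset_left)
          fun a _ => (hX (measurableSet_singleton a)).inter (hY (measurableSet_singleton _))).symm
    _ ≤ μ (A ∩ E) := measure_mono (Set.iUnion₂_subset hpiece)

lemma pow_card_le_measure_restrict_eq {ι β : Type*} [MeasurableSpace β]
    [MeasurableSingletonClass β] {Y : ι → Ω → β} (hY : iIndepFun Y μ) {ε : ℝ≥0∞}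
    (hε : ∀ k b, ε ≤ μ (Y k ⁻¹' {b})) (T : Finset ι) (b : T → β) :
    ε ^ T.card ≤ μ {ω | (fun k : T => Y k ω) = b} := by
  have hT : {ω | (fun k : T => Y k ω) = b} = ⋂ k : T, Y k ⁻¹' {b k} := by
    ext ω; simp [funext_iff]
  rw [hT, (hY.precomp Subtype.val_injective).meas_iInter
    fun k => ⟨{b k}, measurableSet_singleton _, rfl⟩]
  simpa using Finset.pow_card_le_prod Finset.univ (fun k : T => μ (Y k ⁻¹' {b k})) ε
    fun k _ => hε k (b k)

lemma ae_exists_ge_mem_of_measure_iInter_compl_le [IsFiniteMeasure μ] {s : ℕ → Set Ω} {L : ℕ}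
    {r : ℝ≥0∞} (hr : r < 1)
    (h : ∀ m n, m ≤ n → μ (⋂ k ∈ Finset.Ico m (n + L), (s k)ᶜ) ≤
      r * μ (⋂ k ∈ Finset.Ico m n, (s k)ᶜ)) :
    ∀ᵐ ω ∂μ, ∀ m, ∃ n, m ≤ n ∧ ω ∈ s n := by
  have hiter : ∀ m t, μ (⋂ k ∈ Finset.Ico m (m + t * L), (s k)ᶜ) ≤ r ^ t * μ Set.univ := by
    intro m t
    induction t with
    | zero => simp
    | succ t ih =>
      calc μ (⋂ k ∈ Finset.Ico m (m + (t + 1) * L), (s k)ᶜ)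
          ≤ r * μ (⋂ k ∈ Finset.Ico m (m + t * L), (s k)ᶜ) := by
            rw [add_one_mul, ← add_assoc]; exact h m _ (Nat.le_add_right m _)
        _ ≤ r ^ (t + 1) * μ Set.univ := by rw [pow_succ', mul_assoc]; gcongr
  have hlim : Tendsto (fun t : ℕ => r ^ t * μ Set.univ) atTop (𝓝 0) := by
    simpa only [zero_mul] using ENNReal.Tendsto.mul_const
      (ENNReal.tendsto_pow_atTop_nhds_zero_of_lt_one hr) (.inr (measure_ne_top μ _))
  refine ae_all_iff.2 fun m => ae_iff.2 <| le_antisymm (ge_of_tendsto' hlim fun t => ?_) bot_le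
  refine (measure_mono fun ω hω => ?_).trans (hiter m t)
  simp only [Set.mem_iInter, Finset.mem_Ico, Set.mem_compl_iff]
  exact fun k hk hks => hω ⟨k, hk.1, hks⟩

end Probability

section Visits

variable {Ω K : Type*} {N : ℕ}

/-- The event `{Z_n ∈ O and I_{n+1} = j}` of the paper. -/
def visitEvent (F : Fin N → K → K) (I : ℕ → Ω → Fin N) (x : K) (O : Set K) (j : Fin N)
    (n : ℕ) : Set Ω :=
  {ω | traj F I x n ω ∈ O ∧ I n ω = j}

variable {F : Fin N → K → K} {I : ℕ → Ω → Fin N} {x : K} {O : Set K} {j : Fin N}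

lemma mem_visitEvent_congr {n : ℕ} {ω ω' : Ω} (h : ∀ k ≤ n, I k ω = I k ω') :
    ω ∈ visitEvent F I x O j n ↔ ω' ∈ visitEvent F I x O j n := by
  simp only [visitEvent, Set.mem_ofPred_eq, traj_congr (F := F) (J := I) fun k hk => h k hk.le,
    h n le_rfl]

lemma exists_block_forces_visit {L : ℕ}
    (hL : ∀ y, ∃ l : List (Fin N), l.length ≤ L ∧ l.foldl (fun z i => F i z) y ∈ O)
    (n : ℕ) (ω : Ω) :
    ∃ b : Finset.Ico n (n + (L + 1)) → Fin N, ∀ ω', (∀ k < n, I k ω' = I k ω) →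
      (∀ k : Finset.Ico n (n + (L + 1)), I k ω' = b k) →
      ∃ k ∈ Finset.Ico n (n + (L + 1)), ω' ∈ visitEvent F I x O j k := by
  obtain ⟨l, hlen, hl⟩ := hL (traj F I x n ω)
  refine ⟨fun k => if h : k.1 - n < l.length then l[k.1 - n] else j,
    fun ω' hpast hblock => ⟨n + l.length, by simp; omega, ?_, ?_⟩⟩
  · rw [traj_add, traj_congr hpast, traj_length_eq_foldl]
    · exact hl
    · intro i hi
      simpa [hi] using hblock ⟨n + i, by simp; omega⟩
  · simpa using hblock ⟨n + l.length, by simp; omega⟩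

variable [MeasurableSpace Ω] [MeasurableSpace K] {μ : Measure Ω}

lemma measurableSet_visitEvent (hF : ∀ i, Measurable (F i)) (hI : ∀ n, Measurable (I n))
    (hO : MeasurableSet O) (n : ℕ) : MeasurableSet (visitEvent F I x O j n) :=
  (measurable_traj hF hI x n hO).inter (hI n (measurableSet_singleton j))

lemma measure_iInter_compl_visitEvent_le [IsFiniteMeasure μ] (hF : ∀ i, Measurable (F i))
    (hI : ∀ n, Measurable (I n)) (hIndep : iIndepFun I μ) {ε : ℝ≥0∞}
    (hε : ∀ n i, ε ≤ μ (I n ⁻¹' {i})) (hO : MeasurableSet O) {L : ℕ}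
    (hL : ∀ y, ∃ l : List (Fin N), l.length ≤ L ∧ l.foldl (fun z i => F i z) y ∈ O)
    {m n : ℕ} (hmn : m ≤ n) :
    μ (⋂ k ∈ Finset.Ico m (n + (L + 1)), (visitEvent F I x O j k)ᶜ) ≤
      (1 - ε ^ (L + 1)) * μ (⋂ k ∈ Finset.Ico m n, (visitEvent F I x O j k)ᶜ) := by
  set T := Finset.Ico n (n + (L + 1))
  set E := ⋃ k ∈ T, visitEvent F I x O j k
  have hsub : ⋂ k ∈ Finset.Ico m (n + (L + 1)), (visitEvent F I x O j k)ᶜ ⊆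
      (⋂ k ∈ Finset.Ico m n, (visitEvent F I x O j k)ᶜ) \ E := fun ω hω => by
    simp only [Set.mem_iInter, Finset.mem_Ico, Set.mem_sdiff, E, T, Set.mem_iUnion] at hω ⊢
    exact ⟨fun k hk => hω k ⟨hk.1, by omega⟩, fun ⟨k, hk, hkω⟩ => hω k ⟨by omega, hk.2⟩ hkω⟩
  have hT : T.card = L + 1 := by simp [T]
  refine (measure_mono hsub).trans (measure_diff_le_of_mul_le
    (Finset.measurableSet_biUnion _ fun k _ => measurableSet_visitEvent hF hI hO k) ?_)
  refine hT ▸ mul_measure_le_measure_inter_of_indepFun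
    (X := fun ω (k : Finset.range n) => I k ω) (Y := fun ω (k : T) => I k ω)
    (measurable_pi_lambda _ fun k => hI k) (measurable_pi_lambda _ fun k => hI k)
    (hIndep.indepFun_finset _ _ (Finset.disjoint_left.2 fun k h1 h2 => by
      simp only [Finset.mem_range, T, Finset.mem_Ico] at h1 h2; omega) hI)
    (pow_card_le_measure_restrict_eq hIndep hε T) ?_ ?_
  · intro ω ω' hωω' hω
    simp only [funext_iff, Subtype.forall, Finset.mem_range] at hωω'
    simp only [Set.mem_iInter, Finset.mem_Ico, Set.mem_compl_iff] at hω ⊢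
    exact fun k hk => (mem_visitEvent_congr fun i hi => hωω' i (by omega)).not.1 (hω k hk)
  · intro ω _
    obtain ⟨b, hb⟩ := exists_block_forces_visit (I := I) (x := x) (j := j) hL n ω
    refine ⟨b, fun ω' ⟨hX, hY⟩ => ?_⟩
    simp only [Set.mem_preimage, Set.mem_singleton_iff, funext_iff, Subtype.forall,
      Finset.mem_range] at hX hY
    obtain ⟨k, hk, hkω⟩ := hb ω' hX fun k => hY k k.2
    exact Set.mem_biUnion hk hkω

end Visits

theorem stmt12_general {N : ℕ} (F : Fin N → UnitAddCircle ≃ₜ UnitAddCircle)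
    (p : Fin N → ℝ≥0) (hp : ∀ j, 0 < p j)
    (hmin : ∀ (x : UnitAddCircle) (O : Set UnitAddCircle), IsOpen O → O.Nonempty →
      ∃ l : List (Fin N), l.foldl (fun z j => F j z) x ∈ O)
    {Ω : Type*} {mΩ : MeasurableSpace Ω} (P : Measure Ω) [IsProbabilityMeasure P]
    (I : ℕ → Ω → Fin N) (hImeas : ∀ n, Measurable (I n))
    (hIndep : ProbabilityTheory.iIndepFun I P)
    (hLaw : ∀ n j, P (I n ⁻¹' {j}) = (p j : ENNReal))
    (z : UnitAddCircle) (O : Set UnitAddCircle) (hO : IsOpen O) (hOne : O.Nonempty)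
    (j : Fin N) :
    P {ω | ∀ m : ℕ, ∃ n : ℕ, m ≤ n ∧
        traj (fun i => ⇑(F i)) I z n ω ∈ O ∧ I n ω = j} = 1 := by
  have : Nonempty (Fin N) := ⟨j⟩
  obtain ⟨i₀, hi₀⟩ := Finite.exists_min p
  have hε : ∀ n i, (p i₀ : ℝ≥0∞) ≤ P (I n ⁻¹' {i}) := fun n i => by
    rw [hLaw]; exact_mod_cast hi₀ i
  obtain ⟨L, hL⟩ := exists_forall_exists_length_le_foldl_mem (fun i => (F i).continuous) hO
    fun x => hmin x O hO hOne
  have hr : 1 - (p i₀ : ℝ≥0∞) ^ (L + 1) < 1 := ENNReal.sub_lt_self ENNReal.one_ne_top one_ne_zero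
    (ENNReal.pow_pos (ENNReal.coe_pos.2 (hp i₀)) _).ne'
  have hvisits := ae_exists_ge_mem_of_measure_iInter_compl_le hr fun m n hmn =>
    measure_iInter_compl_visitEvent_le (x := z) (j := j) (fun i => (F i).continuous.measurable)
      hImeas hIndep hε hO.measurableSet hL hmn
  rw [← measure_univ (μ := P)]
  exact measure_congr (ae_eq_univ.2 (ae_iff.1 hvisits))

/-- for a forward minimal IFS with probabilities of homeomorphisms of the
circle, for every starting point `z`, every nonempty open `O` and every index `j`, with
probability one the trajectory visits `O` with next chosen map `f_j` infinitely often. -/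
theorem stmt12 {N : ℕ} (F : Fin N → UnitAddCircle ≃ₜ UnitAddCircle)
    (p : Fin N → ℝ≥0) (hp : ∀ j, 0 < p j) (hsum : ∑ j, p j = 1)
    (hmin : ∀ (x : UnitAddCircle) (O : Set UnitAddCircle), IsOpen O → O.Nonempty →
      ∃ l : List (Fin N), l.foldl (fun z j => F j z) x ∈ O)
    {Ω : Type*} {mΩ : MeasurableSpace Ω} (P : Measure Ω) [IsProbabilityMeasure P]
    (I : ℕ → Ω → Fin N) (hImeas : ∀ n, Measurable (I n))
    (hIndep : ProbabilityTheory.iIndepFun I P)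
    (hLaw : ∀ n j, P (I n ⁻¹' {j}) = (p j : ENNReal))
    (z : UnitAddCircle) (O : Set UnitAddCircle) (hO : IsOpen O) (hOne : O.Nonempty)
    (j : Fin N) :
    P {ω | ∀ m : ℕ, ∃ n : ℕ, m ≤ n ∧
        traj (fun i => ⇑(F i)) I z n ω ∈ O ∧ I n ω = j} = 1 :=
  stmt12_general F p hp hmin (mΩ := mΩ) P I hImeas hIndep hLaw z O hO hOne j
end

section
/- Let F = {f₁,...,f_N} be homeomorphisms of S¹ and suppose L(F,d) is finite with smallest positive element 1/k for some integer k ≥ 2. Define π : S¹ → S¹ by π(x) = kx mod 1 and, for each j, f̃_j(x) = k·(f_j(x/k) mod 1/k). Then each f̃_j is well defined (independent of the choice of representative x/k of π-preimage) and π ∘ f_j = f̃_j ∘ π, i.e., each f̃_j is a topological factor of f_j via the common factor map π. -/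
open Function Topology

namespace AddCircle

variable {p : ℝ}

theorem exists_coe_eq_and_norm_eq_abs (x : AddCircle p) :
    ∃ a : ℝ, (a : AddCircle p) = x ∧ ‖x‖ = |a| := by
  obtain ⟨b, rfl⟩ := QuotientAddGroup.mk_surjective x
  refine ⟨b - round (p⁻¹ * b) * p, ?_, norm_eq p⟩
  rw [coe_sub, sub_eq_self, ← zsmul_eq_mul, coe_zsmul, coe_period, smul_zero]

theorem eq_or_eq_neg_of_norm_eq_norm {x y : AddCircle p} (h : ‖x‖ = ‖y‖) : x = y ∨ x = -y := by
  obtain ⟨a, rfl, hx⟩ := exists_coe_eq_and_norm_eq_abs x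
  obtain ⟨b, rfl, hy⟩ := exists_coe_eq_and_norm_eq_abs y
  rcases abs_eq_abs.mp (hx.symm.trans (h.trans hy)) with rfl | rfl
  exacts [Or.inl rfl, Or.inr (coe_neg _)]

theorem exists_map_add_eq_add_of_dist_eq {f : AddCircle p → AddCircle p} (hf : Continuous f)
    {d : AddCircle p} (hd : ∀ x y, dist x y = ‖d‖ → dist (f x) (f y) = ‖d‖) :
    ∃ c, (c = d ∨ c = -d) ∧ ∀ x, f (x + d) = f x + c := by
  set φ : AddCircle p → AddCircle p := fun x ↦ f (x + d) - f x
  have hφ : ∀ x, φ x = d ∨ φ x = -d := fun x ↦ eq_or_eq_neg_of_norm_eq_norm <| by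
    rw [← dist_eq_norm]
    exact hd _ _ (by rw [dist_eq_norm, add_sub_cancel_left])
  have hconst : ∀ x, φ x = φ 0 :=
    fun x ↦ isPreconnected_univ.constant_of_mapsTo (T := {d, -d}) (Set.toFinite _).isDiscrete
      (by fun_prop) (fun x _ ↦ hφ x) trivial trivial
  exact ⟨φ 0, hφ 0, fun x ↦ by rw [← hconst x, add_sub_cancel]⟩

theorem nsmul_coe_div_natCast {k : ℕ} (hk : k ≠ 0) : k • (↑(p / k) : AddCircle p) = 0 := by
  rw [← coe_nsmul, nsmul_eq_mul, mul_div_cancel₀ _ (by exact_mod_cast hk), coe_period]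

theorem isQuotientMap_nsmul {k : ℕ} (hk : k ≠ 0) : IsQuotientMap (fun x : AddCircle p ↦ k • x) :=
  have : NeZero k := ⟨hk⟩
  (isAddQuotientCoveringMap_nsmul_of_ne_zero p k).toIsQuotientMap

variable [Fact (0 < p)]

theorem exists_eq_nsmul_of_nsmul_eq_zero {k : ℕ} (hk : k ≠ 0) {u : AddCircle p}
    (hu : k • u = 0) : ∃ m : ℕ, u = m • (↑(p / k) : AddCircle p) := by
  obtain ⟨m, -, rfl⟩ := (AddCircle.nsmul_eq_zero_iff (Nat.pos_of_ne_zero hk)).mp hu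
  exact ⟨m, by rw [← coe_nsmul, nsmul_eq_mul, mul_div, div_mul_eq_mul_div]⟩

theorem norm_coe_div_natCast {k : ℕ} (hk : 2 ≤ k) : ‖(↑(p / k) : AddCircle p)‖ = p / k := by
  have hp : 0 < p := Fact.out
  have hk' : (2 : ℝ) ≤ k := by exact_mod_cast hk
  have hle : |p / k| ≤ |p| / 2 := by
    rw [abs_of_pos (by positivity), abs_of_pos hp]
    exact div_le_div_of_nonneg_left hp.le two_pos hk'
  rw [(norm_coe_eq_abs_iff p hp.ne').mpr hle, abs_of_pos (by positivity)]

theorem nsmul_map_eq_of_nsmul_eq {k : ℕ} (hk : k ≠ 0) {f : AddCircle p → AddCircle p}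
    {c : AddCircle p} (hf : ∀ x, f (x + ↑(p / k)) = f x + c) (hc : k • c = 0)
    {x y : AddCircle p} (hxy : k • x = k • y) : k • f x = k • f y := by
  have hiter : ∀ z (n : ℕ), f (z + n • ↑(p / k)) = f z + n • c :=
    AddConstMapClass.map_add_nsmul (⟨f, hf⟩ : AddConstMap (AddCircle p) (AddCircle p) _ c)
  obtain ⟨m, hm⟩ : ∃ m : ℕ, y - x = m • ↑(p / k) :=
    exists_eq_nsmul_of_nsmul_eq_zero hk (by rw [smul_sub, hxy, sub_self])
  rw [← add_sub_cancel x y, hm, hiter, smul_add, smul_comm k m c, hc, smul_zero, add_zero]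

theorem exists_continuous_nsmul_factor {k : ℕ} (hk : 2 ≤ k) {f : AddCircle p → AddCircle p}
    (hf : Continuous f) (hd : ∀ x y, dist x y = p / k → dist (f x) (f y) = p / k) :
    ∃ g : AddCircle p → AddCircle p, Continuous g ∧ ∀ x, g (k • x) = k • f x := by
  have hk0 : k ≠ 0 := by omega
  rw [← norm_coe_div_natCast hk] at hd
  obtain ⟨c, hc, hfc⟩ := exists_map_add_eq_add_of_dist_eq hf hd
  have hkc : k • c = 0 := by
    rcases hc with rfl | rfl
    exacts [nsmul_coe_div_natCast hk0, by rw [smul_neg, nsmul_coe_div_natCast hk0, neg_zero]]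
  have hfac : FactorsThrough (fun x ↦ k • f x) (fun x : AddCircle p ↦ k • x) :=
    fun x y hxy ↦ nsmul_map_eq_of_nsmul_eq hk0 hfc hkc hxy
  refine ⟨extend (k • ·) (fun x ↦ k • f x) id, ?_, hfac.extend_apply id⟩
  rw [(isQuotientMap_nsmul hk0).continuous_iff, hfac.extend_comp id]
  fun_prop

end AddCircle

theorem stmt16_general {N : ℕ} (F : Fin N → UnitAddCircle ≃ₜ UnitAddCircle)
    (k : ℕ) (hk : 2 ≤ k)
    (hmem : (1 / (k : ℝ)) ∈ presDist F) :
    Function.Surjective (fun x : UnitAddCircle => k • x) ∧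
    ∀ j : Fin N, ∃ g : UnitAddCircle → UnitAddCircle, Continuous g ∧
      ∀ x : UnitAddCircle, g (k • x) = k • (F j x) :=
  ⟨(AddCircle.isQuotientMap_nsmul (by omega)).surjective, fun j ↦
    AddCircle.exists_continuous_nsmul_factor hk (F j).continuous (hmem.2 j)⟩

/-- if `L(F,d)` is finite with smallest positive element `1/k`, `k ≥ 2`,
then with `π(x) = k·x (mod 1)` each map `f_j` admits a well-defined continuous factor
`f̃_j` satisfying `π ∘ f_j = f̃_j ∘ π`; moreover `π` is a (continuous) surjection, i.e.
each `f̃_j` is a topological factor of `f_j` via the common factor map `π`. -/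
theorem stmt16 {N : ℕ} (F : Fin N → UnitAddCircle ≃ₜ UnitAddCircle)
    (k : ℕ) (hk : 2 ≤ k)
    (hfin : (presDist F).Finite)
    (hmem : (1 / (k : ℝ)) ∈ presDist F)
    (hsmall : ∀ s ∈ presDist F, 0 < s → (1 / (k : ℝ)) ≤ s) :
    Function.Surjective (fun x : UnitAddCircle => k • x) ∧
    ∀ j : Fin N, ∃ g : UnitAddCircle → UnitAddCircle, Continuous g ∧
      ∀ x : UnitAddCircle, g (k • x) = k • (F j x) :=
  stmt16_general F k hk hmem
end
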